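/- arXiv:1501.03539 — 7 statements merged into one kernel-verified Lean document; each statement's English description precedes it below -/
import Mathlib

section
/- Let h ∈ (0,∞), let N ∈ ℕ with N ≥ 1, set T = N·h, and let λ ∈ (0,∞) and μ ∈ ℝ. Then μ² · ∫_0^T ( e^{-2λs} - e^{-2λ·⌈s⌉_h} ) ds ≥ μ² · (1 - e^{-2λT}) · h / (4 · e^{λh}) ≥ 0. (This is the variance gap Var⟨b,X⟩ − Var⟨b,Y₁⟩ between the exact stochastic convolution and its exponential-Euler approximation in the b-th eigendirection, expressed deterministically via Itô's isometry.) -/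
open MeasureTheory Real

/-!
On a grid cell `(a, a + h]` the ceiling `h⌈s/h⌉` equals `a + h`, so the integral over the cell
is explicit. Writing `x = λh`, its comparison with `(e^{-2λa} - e^{-2λ(a+h)}) h / (4e^{λh})`
reduces to the elementary inequality `x sinh x + 2x ≤ e^{2x} - 1`, and summing over the `N`
cells telescopes to `1 - e^{-2λT}`.
-/

lemma mul_sinh_add_two_mul_le_exp_two_mul_sub_one {x : ℝ} (hx : 0 ≤ x) :
    x * sinh x + 2 * x ≤ exp (2 * x) - 1 := by
  have hF := exp_pos x
  have hle : 1 + x ≤ exp x := by linarith [add_one_le_exp x]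
  rw [sinh_eq, exp_neg, show exp (2 * x) = exp x * exp x by rw [two_mul, exp_add]]
  set F := exp x
  have hrw : F * F - 1 - (x * ((F - F⁻¹) / 2) + 2 * x)
      = (2 * F * (F ^ 2 - 1) - x * (F ^ 2 - 1) - 4 * x * F) / (2 * F) := by
    field_simp
    ring
  rw [← sub_nonneg, hrw]
  apply div_nonneg _ (by positivity)
  nlinarith [mul_nonneg (mul_nonneg hx hF.le) (sub_nonneg.2 hle),
    mul_nonneg (mul_nonneg hx (mul_nonneg hF.le hF.le)) (sub_nonneg.2 hle),
    mul_nonneg hx (sq_nonneg (F - 1)), sq_nonneg (F - 1 - x), pow_nonneg hx 3]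

lemma integral_exp_const_mul {k : ℝ} (hk : k ≠ 0) (a b : ℝ) :
    ∫ s in a..b, exp (k * s) = (exp (k * b) - exp (k * a)) / k := by
  rw [intervalIntegral.integral_comp_mul_left (f := exp) hk, integral_exp, smul_eq_mul,
    inv_mul_eq_div]

lemma antitone_exp_mul_mul_ceil_div {k h : ℝ} (hk : k ≤ 0) (hh : 0 < h) :
    Antitone fun s : ℝ => exp (k * (h * ⌈s / h⌉)) := by
  intro s t hst
  simp only [exp_le_exp]
  apply mul_le_mul_of_nonpos_left _ hk
  gcongr

lemma le_integral_exp_sub_exp_right {lam h : ℝ} (hlam : 0 < lam) (hh : 0 < h) (a : ℝ) :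
    (exp (-2 * lam * a) - exp (-2 * lam * (a + h))) * (h / (4 * exp (lam * h)))
      ≤ ∫ s in a..a + h, (exp (-2 * lam * s) - exp (-2 * lam * (a + h))) := by
  have key := mul_sinh_add_two_mul_le_exp_two_mul_sub_one (mul_pos hlam hh).le
  rw [sinh_eq, exp_neg, show exp (2 * (lam * h)) = exp (lam * h) * exp (lam * h) by
    rw [two_mul, exp_add]] at key
  have hcont : Continuous fun s : ℝ => exp (-2 * lam * s) := by fun_prop
  rw [intervalIntegral.integral_sub (hcont.intervalIntegrable _ _) intervalIntegrable_const,
    integral_exp_const_mul (by positivity), intervalIntegral.integral_const, smul_eq_mul,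
    add_sub_cancel_left, show exp (-2 * lam * (a + h))
      = exp (-2 * lam * a) / (exp (lam * h) * exp (lam * h)) by
        rw [← exp_add, ← exp_sub]; ring_nf]
  set E := exp (-2 * lam * a)
  set F := exp (lam * h)
  have hE : 0 < E := exp_pos _
  have hF : 0 < F := exp_pos _
  rw [← sub_nonneg]
  have hrw : (E / (F * F) - E) / (-2 * lam) - h * (E / (F * F))
        - (E - E / (F * F)) * (h / (4 * F))
      = E * (F * F - 1 - (lam * h * ((F - F⁻¹) / 2) + 2 * (lam * h))) / (2 * lam * (F * F)) := by
    field_simp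
    ring
  rw [hrw]
  exact div_nonneg (mul_nonneg hE.le (sub_nonneg.2 key)) (by positivity)

lemma mul_ceil_div_eq_of_mem_Ioc {h s : ℝ} (hh : 0 < h) (n : ℕ)
    (hs : s ∈ Set.Ioc (n * h) (n * h + h)) : h * ⌈s / h⌉ = n * h + h := by
  have hceil : ⌈s / h⌉ = (n : ℤ) + 1 := by
    rw [Int.ceil_eq_iff]
    push_cast
    constructor
    · rw [add_sub_cancel_right, lt_div_iff₀ hh]
      exact hs.1
    · rw [div_le_iff₀ hh, add_one_mul]
      exact hs.2
  rw [hceil]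
  push_cast
  ring

lemma le_integral_exp_sub_exp_ceil {lam h : ℝ} (hlam : 0 < lam) (hh : 0 < h) (n : ℕ) :
    (1 - exp (-2 * lam * (n * h))) * h / (4 * exp (lam * h))
      ≤ ∫ s in (0 : ℝ)..n * h, (exp (-2 * lam * s) - exp (-2 * lam * (h * ⌈s / h⌉))) := by
  have hint (a b : ℝ) : IntervalIntegrable
      (fun s => exp (-2 * lam * s) - exp (-2 * lam * (h * ⌈s / h⌉))) volume a b :=
    ((by fun_prop : Continuous fun s : ℝ => exp (-2 * lam * s)).intervalIntegrable a b).sub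
      ((antitone_exp_mul_mul_ceil_div (by linarith) hh).intervalIntegrable)
  induction n with
  | zero => simp
  | succ n ih =>
    have hcell : ∫ s in (n * h : ℝ)..n * h + h,
          (exp (-2 * lam * s) - exp (-2 * lam * (h * ⌈s / h⌉)))
        = ∫ s in (n * h : ℝ)..n * h + h, (exp (-2 * lam * s) - exp (-2 * lam * (n * h + h))) :=
      intervalIntegral.integral_congr_ae (Filter.Eventually.of_forall fun s hs => by
        rw [Set.uIoc_of_le (by linarith), Set.mem_Ioc] at hs
        rw [mul_ceil_div_eq_of_mem_Ioc hh n hs])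
    rw [Nat.cast_succ, add_one_mul,
      ← intervalIntegral.integral_add_adjacent_intervals (hint _ _) (hint _ _), hcell]
    linear_combination ih + le_integral_exp_sub_exp_right hlam hh (n * h)

theorem stmt_0_general (h : ℝ) (hh : 0 < h) (N : ℕ) (T : ℝ) (hT : T = N * h)
    (lam μ : ℝ) (hlam : 0 < lam) :
    μ ^ 2 * ∫ s in (0:ℝ)..T,
        (Real.exp (-2 * lam * s) - Real.exp (-2 * lam * (h * (⌈s / h⌉ : ℝ))))
      ≥ μ ^ 2 * (1 - Real.exp (-2 * lam * T)) * h / (4 * Real.exp (lam * h)) ∧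
    μ ^ 2 * (1 - Real.exp (-2 * lam * T)) * h / (4 * Real.exp (lam * h)) ≥ 0 := by
  subst hT
  have hdecay : exp (-2 * lam * (N * h)) ≤ 1 :=
    exp_le_one_iff.2 (mul_nonpos_of_nonpos_of_nonneg (by linarith) (by positivity))
  refine ⟨?_, by have := sub_nonneg.2 hdecay; positivity⟩
  rw [ge_iff_le, mul_assoc, mul_div_assoc]
  exact mul_le_mul_of_nonneg_left (le_integral_exp_sub_exp_ceil hlam hh N) (sq_nonneg μ)

/-- Variance gap (exponential Euler): for `h ∈ (0,∞)`, `N ≥ 1`, `T = N·h`,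
`λ ∈ (0,∞)`, `μ ∈ ℝ`, one has
`μ² · ∫_0^T (e^{-2λs} - e^{-2λ⌈s⌉_h}) ds ≥ μ²(1-e^{-2λT})h/(4 e^{λh}) ≥ 0`,
where `⌈s⌉_h = h·⌈s/h⌉`. -/
theorem stmt_0 (h : ℝ) (hh : 0 < h) (N : ℕ) (hN : 1 ≤ N) (T : ℝ) (hT : T = N * h)
    (lam μ : ℝ) (hlam : 0 < lam) :
    μ ^ 2 * ∫ s in (0:ℝ)..T,
        (Real.exp (-2 * lam * s) - Real.exp (-2 * lam * (h * (⌈s / h⌉ : ℝ))))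
      ≥ μ ^ 2 * (1 - Real.exp (-2 * lam * T)) * h / (4 * Real.exp (lam * h)) ∧
    μ ^ 2 * (1 - Real.exp (-2 * lam * T)) * h / (4 * Real.exp (lam * h)) ≥ 0 :=
  stmt_0_general h hh N T hT lam μ hlam
end

section
/- Let h ∈ (0,∞), let N ∈ ℕ with N ≥ 1, set T = N·h, and let λ ∈ (0,∞). Then ∫_0^T ( e^{-2λs} - e^{-2λ·⌈s⌉_h} ) ds = ( (1 - e^{-2λT}) / (1 - e^{-2λh}) ) · ∫_0^h ( e^{-2λs} - e^{-2λh} ) ds. -/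
/-!
On the `k`-th cell `(k h, (k + 1) h]` the grid ceiling `⌈s⌉_h` equals `(k + 1) h`, so translating
the cell to `(0, h]` turns the integrand into `e^{-2λkh} (e^{-2λt} - e^{-2λh})`. The integral over
`[0, N h]` is therefore a geometric sum with ratio `e^{-2λh}` times the integral over one cell.
-/

open MeasureTheory Set

theorem Int.ceil_add_mul_div_eq_add_one {h t : ℝ} (hh : 0 < h) (ht : t ∈ Ioc 0 h) (k : ℤ) :
    ⌈(t + k * h) / h⌉ = k + 1 := by
  have hceil : ⌈t / h⌉ = 1 := by
    rw [Int.ceil_eq_iff, Int.cast_one, sub_self]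
    exact ⟨div_pos ht.1 hh, (div_le_one hh).2 ht.2⟩
  rw [add_div, mul_div_cancel_right₀ _ hh.ne', Int.ceil_add_intCast, hceil, add_comm]

theorem intervalIntegral_zero_nat_mul_eq_geom_sum_mul {F g : ℝ → ℝ} {h r : ℝ} (hh : 0 ≤ h)
    (hg : IntervalIntegrable g volume 0 h)
    (hF : ∀ k : ℕ, ∀ t ∈ Ioc 0 h, F (t + k * h) = r ^ k * g t) (N : ℕ) :
    IntervalIntegrable F volume 0 (N * h) ∧
      ∫ s in (0:ℝ)..N * h, F s = (∑ k ∈ Finset.range N, r ^ k) * ∫ t in (0:ℝ)..h, g t := by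
  induction N with
  | zero => simp
  | succ N ih =>
    have hshift : EqOn (fun t => F (t + N * h)) (fun t => r ^ N * g t) (uIoc 0 h) := by
      rw [uIoc_of_le hh]
      exact hF N
    have hcell : IntervalIntegrable F volume (N * h) ((N + 1 : ℕ) * h) := by
      have := (hg.const_mul (r ^ N)).congr hshift.symm
      rw [IntervalIntegrable.comp_add_right_iff] at this
      convert this using 1 <;> push_cast <;> ring
    have hcell_integral : ∫ s in (N * h : ℝ)..(N + 1 : ℕ) * h, F s
        = r ^ N * ∫ t in (0:ℝ)..h, g t := by
      rw [← intervalIntegral.integral_const_mul,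
        ← intervalIntegral.integral_congr_ae (Filter.Eventually.of_forall fun t => hshift (x := t)),
        intervalIntegral.integral_comp_add_right]
      congr 1 <;> push_cast <;> ring
    refine ⟨ih.1.trans hcell, ?_⟩
    rw [← intervalIntegral.integral_add_adjacent_intervals ih.1 hcell, ih.2, hcell_integral,
      Finset.sum_range_succ, add_mul]

theorem stmt_1_general (h : ℝ) (hh : 0 < h) (N : ℕ) (T : ℝ) (hT : T = N * h)
    (lam : ℝ) (hlam : 0 < lam) :
    ∫ s in (0:ℝ)..T,
        (Real.exp (-2 * lam * s) - Real.exp (-2 * lam * (h * (⌈s / h⌉ : ℝ))))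
      = ((1 - Real.exp (-2 * lam * T)) / (1 - Real.exp (-2 * lam * h)))
        * ∫ s in (0:ℝ)..h, (Real.exp (-2 * lam * s) - Real.exp (-2 * lam * h)) := by
  subst hT
  set r := Real.exp (-2 * lam * h)
  have hr : r < 1 := Real.exp_lt_one_iff.2 (by nlinarith)
  have hrN : r ^ N = Real.exp (-2 * lam * (N * h)) := by rw [← Real.exp_nat_mul]; ring_nf
  have hcell : ∀ k : ℕ, ∀ t ∈ Ioc 0 h,
      Real.exp (-2 * lam * (t + k * h)) - Real.exp (-2 * lam * (h * ⌈(t + k * h) / h⌉))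
        = r ^ k * (Real.exp (-2 * lam * t) - r) := by
    intro k t ht
    have hceil := Int.ceil_add_mul_div_eq_add_one hh ht k
    rw [Int.cast_natCast] at hceil
    rw [hceil, ← Real.exp_nat_mul, mul_sub, ← Real.exp_add, ← Real.exp_add]
    push_cast
    ring_nf
  have hg : IntervalIntegrable (fun t => Real.exp (-2 * lam * t) - r) volume 0 h :=
    (by fun_prop : Continuous fun t => Real.exp (-2 * lam * t) - r).intervalIntegrable 0 h
  rw [(intervalIntegral_zero_nat_mul_eq_geom_sum_mul hh.le hg hcell N).2, ← hrN,
    ← geom_sum_mul_neg, mul_div_cancel_right₀ _ (sub_ne_zero.2 hr.ne')]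

/-- For `h ∈ (0,∞)`, `N ≥ 1`, `T = N·h`, `λ ∈ (0,∞)`:
`∫_0^T (e^{-2λs} - e^{-2λ⌈s⌉_h}) ds
  = ((1-e^{-2λT})/(1-e^{-2λh})) · ∫_0^h (e^{-2λs} - e^{-2λh}) ds`,
where `⌈s⌉_h = h·⌈s/h⌉`. -/
theorem stmt_1 (h : ℝ) (hh : 0 < h) (N : ℕ) (hN : 1 ≤ N) (T : ℝ) (hT : T = N * h)
    (lam : ℝ) (hlam : 0 < lam) :
    ∫ s in (0:ℝ)..T,
        (Real.exp (-2 * lam * s) - Real.exp (-2 * lam * (h * (⌈s / h⌉ : ℝ))))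
      = ((1 - Real.exp (-2 * lam * T)) / (1 - Real.exp (-2 * lam * h)))
        * ∫ s in (0:ℝ)..h, (Real.exp (-2 * lam * s) - Real.exp (-2 * lam * h)) :=
  stmt_1_general h hh N T hT lam hlam
end

section
/- Let h ∈ (0,∞), let N ∈ ℕ with N ≥ 1, set T = N·h, and let λ ∈ (0,∞) and μ ∈ ℝ. Then μ² · [ (1 - e^{-2λT}) / (2λ) − h · Σ_{k=1}^{N} (1 + hλ)^{-2k} ] ≥ μ² · (1 - e^{-2λT}) · h / (4·(1 + hλ)) ≥ μ² · (1 - e^{-2λT}) · h / (4 · e^{λh}) ≥ 0. (This is the variance gap Var⟨b,X⟩ − Var⟨b,Y₂⟩ between the exact stochastic convolution and its linear-implicit Euler approximation in the b-th eigendirection, expressed deterministically via Itô's isometry.) -/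
lemma geom_key (a : ℝ) (ha : a ≠ 0) (N : ℕ) :
    (a ^ 2 - 1) * ∑ k ∈ Finset.Icc 1 N, ((a : ℝ) ^ (2 * k))⁻¹ = 1 - (a ^ (2 * N))⁻¹ := by
  induction N with
  | zero => simp
  | succ n ih =>
    rw [Finset.sum_Icc_succ_top (Nat.le_add_left 1 n), mul_add, ih]
    have h1 : a ^ (2 * (n + 1)) = a ^ (2 * n) * a ^ 2 := by ring
    have h2 : a ^ (2 * n) ≠ 0 := pow_ne_zero _ ha
    rw [h1]
    field_simp
    ring

/-- Variance gap (linear-implicit Euler): for `h ∈ (0,∞)`, `N ≥ 1`, `T = N·h`,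
`λ ∈ (0,∞)`, `μ ∈ ℝ`:
`μ²[(1-e^{-2λT})/(2λ) − h Σ_{k=1}^N (1+hλ)^{-2k}]
  ≥ μ²(1-e^{-2λT})h/(4(1+hλ)) ≥ μ²(1-e^{-2λT})h/(4 e^{λh}) ≥ 0`. -/
theorem stmt_3 (h : ℝ) (hh : 0 < h) (N : ℕ) (hN : 1 ≤ N) (T : ℝ) (hT : T = N * h)
    (lam μ : ℝ) (hlam : 0 < lam) :
    μ ^ 2 * ((1 - Real.exp (-2 * lam * T)) / (2 * lam)
        - h * ∑ k ∈ Finset.Icc 1 N, ((1 + h * lam) ^ (2 * k))⁻¹)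
      ≥ μ ^ 2 * (1 - Real.exp (-2 * lam * T)) * h / (4 * (1 + h * lam)) ∧
    μ ^ 2 * (1 - Real.exp (-2 * lam * T)) * h / (4 * (1 + h * lam))
      ≥ μ ^ 2 * (1 - Real.exp (-2 * lam * T)) * h / (4 * Real.exp (lam * h)) ∧
    μ ^ 2 * (1 - Real.exp (-2 * lam * T)) * h / (4 * Real.exp (lam * h)) ≥ 0 := by
  have hhl : 0 < h * lam := mul_pos hh hlam
  have ha0 : (0:ℝ) < 1 + h * lam := by linarith
  have hc0 : (0:ℝ) < 2 + h * lam := by linarith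
  set E := Real.exp (-2 * lam * T) with hE
  have hT0 : 0 ≤ T := by rw [hT]; positivity
  have hE1 : E ≤ 1 := Real.exp_le_one_iff.mpr (by nlinarith)
  have hE0 : 0 < E := Real.exp_pos _
  set v : ℝ := ((1 + h * lam) ^ (2 * N))⁻¹ with hv
  have hv0 : 0 < v := by positivity
  have haexp : 1 + h * lam ≤ Real.exp (lam * h) := by
    have := Real.add_one_le_exp (lam * h)
    nlinarith
  have hEv : E ≤ v := by
    rw [hv, hE]
    have h1 : (1 + h * lam) ^ (2 * N) ≤ Real.exp (lam * h) ^ (2 * N) :=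
      pow_le_pow_left₀ (le_of_lt ha0) haexp _
    have h2 : Real.exp (lam * h) ^ (2 * N) = Real.exp (2 * lam * T) := by
      rw [← Real.exp_nat_mul, hT]; push_cast; ring_nf
    have h3 : Real.exp (-2 * lam * T) = (Real.exp (2 * lam * T))⁻¹ := by
      rw [← Real.exp_neg]; ring_nf
    rw [h3]
    exact inv_anti₀ (by positivity) (h2 ▸ h1)
  have hS : h * ∑ k ∈ Finset.Icc 1 N, ((1 + h * lam) ^ (2 * k))⁻¹
      = (1 - v) / (lam * (2 + h * lam)) := by
    have key := geom_key (1 + h * lam) (ne_of_gt ha0) N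
    have hfac : (1 + h * lam) ^ 2 - 1 = h * (lam * (2 + h * lam)) := by ring
    rw [hfac, ← hv] at key
    field_simp at key ⊢
    linarith [key]
  have hμ : 0 ≤ μ ^ 2 := sq_nonneg μ
  have hnum : 0 ≤ μ ^ 2 * (1 - E) * h := by
    apply mul_nonneg (mul_nonneg hμ (by linarith)) (le_of_lt hh)
  refine ⟨?_, ?_, ?_⟩
  · rw [hS]
    have step1 : (1 - v) / (lam * (2 + h * lam)) ≤ (1 - E) / (lam * (2 + h * lam)) := by
      have : 1 - v ≤ 1 - E := by linarith
      gcongr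
    have eq1 : (1 - E) / (2 * lam) - (1 - E) / (lam * (2 + h * lam))
        = (1 - E) * h / (2 * (2 + h * lam)) := by
      field_simp
      ring
    have step2 : (1 - E) * h / (4 * (1 + h * lam)) ≤ (1 - E) * h / (2 * (2 + h * lam)) := by
      apply div_le_div_of_nonneg_left (by nlinarith) (by positivity) (by linarith)
    have bracket : (1 - E) * h / (4 * (1 + h * lam))
        ≤ (1 - E) / (2 * lam) - (1 - v) / (lam * (2 + h * lam)) := by linarith
    calc μ ^ 2 * (1 - E) * h / (4 * (1 + h * lam))
        = μ ^ 2 * ((1 - E) * h / (4 * (1 + h * lam))) := by ring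
      _ ≤ μ ^ 2 * ((1 - E) / (2 * lam) - (1 - v) / (lam * (2 + h * lam))) :=
          mul_le_mul_of_nonneg_left bracket hμ
  · rw [ge_iff_le]
    apply div_le_div_of_nonneg_left hnum (by positivity) (by linarith)
  · exact div_nonneg hnum (by positivity)
end

section
/- Let c, ρ, h ∈ (0,∞), let δ ∈ ℝ, let N ∈ ℕ with N ≥ 1, and set T = N·h. Then the series Σ_{n=1}^{∞} n^{2ρδ} · e^{-c·n^{ρ}·h} converges and ( c^{2δ} · (1 - e^{-2cT}) · h / 4 ) · Σ_{n=1}^{∞} n^{2ρδ} · e^{-c·n^{ρ}·h} ≥ [ (1 - e^{-2cT}) · (1 - e^{-1}) · T^{(1/ρ + 2δ)⁺} · c^{2δ} · h^{1 - (1/ρ + 2δ)⁺} ] / [ 4^{(1 + ρ·δ⁻)} · e^{2^{ρ}·e·c·T} · ( ρ + (1 + 2ρδ)⁻ ) ] > 0. (This is the lower bound for E[‖X‖²] − E[‖Y_i‖²] in Proposition 8.3, expressed deterministically through the explicit variances of the Gaussian coordinates.) -/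
/-!
Cutting the series off at `M = ⌈(e N)^{1/ρ}⌉` costs at most the factor `e^{2^ρ e c T}`: every
exponent `c n^ρ h` with `n ≤ M ≤ 2 (e N)^{1/ρ}` is at most `2^ρ e c N h`. The truncated sum
`Σ_{n ≤ M} n^α` (with `α = 2ρδ`) dominates `∫_1^{(eN)^{1/ρ}} y^α dy`, which is explicit; writing
`γ = (1 + α)/ρ`, the needed bound `N^{γ⁺} ≤ (ρ + (1 + α)⁻) ∫ …` comes down to `e^γ ≥ 1 + γ`.
The remaining factors `1 - e^{-1} ≤ 1` and `4^{ρδ⁻} ≥ 1` only weaken the estimate.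
-/

open Real Finset Filter Topology

theorem summable_rpow_mul_exp_neg_mul_rpow (α : ℝ) {a ρ : ℝ} (ha : 0 < a) (hρ : 0 < ρ) :
    Summable fun n : ℕ => ((n : ℝ) + 1) ^ α * exp (-a * ((n : ℝ) + 1) ^ ρ) := by
  have hlim : Tendsto (fun n : ℕ => ((n : ℝ) + 1) ^ (α + 2) * exp (-a * ((n : ℝ) + 1) ^ ρ))
      atTop (𝓝 0) := by
    have hpow : Tendsto (fun n : ℕ => ((n : ℝ) + 1) ^ ρ) atTop atTop :=
      (tendsto_rpow_atTop hρ).comp (tendsto_atTop_add_const_right _ 1 tendsto_natCast_atTop_atTop)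
    refine ((tendsto_rpow_mul_exp_neg_mul_atTop_nhds_zero ((α + 2) / ρ) a ha).comp hpow).congr
      fun n => ?_
    rw [Function.comp_apply, ← rpow_mul (by positivity), mul_div_cancel₀ _ hρ.ne']
  have hsum : Summable fun n : ℕ => ((n : ℝ) + 1) ^ (-2 : ℝ) := by
    exact_mod_cast (summable_nat_add_iff 1).2 (summable_nat_rpow.2 (by norm_num : (-2 : ℝ) < -1))
  refine hsum.of_norm_bounded_eventually_nat ?_
  filter_upwards [hlim.eventually_le_const one_pos] with n hn
  have hsplit : ((n : ℝ) + 1) ^ α = ((n : ℝ) + 1) ^ (α + 2) * ((n : ℝ) + 1) ^ (-2 : ℝ) := by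
    rw [← rpow_add (by positivity)]; ring_nf
  rw [Real.norm_of_nonneg (by positivity), hsplit, mul_right_comm]
  exact mul_le_of_le_one_left (by positivity) hn

theorem sum_rpow_le_exp_mul_tsum (α : ℝ) {a ρ : ℝ} (ha : 0 < a) (hρ : 0 < ρ) (M : ℕ) :
    ∑ i ∈ range M, ((i : ℝ) + 1) ^ α
      ≤ exp (a * (M : ℝ) ^ ρ) * ∑' n : ℕ, ((n : ℝ) + 1) ^ α * exp (-a * ((n : ℝ) + 1) ^ ρ) := by
  rw [← tsum_mul_left]
  refine (sum_le_sum fun i hi => ?_).trans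
    (((summable_rpow_mul_exp_neg_mul_rpow α ha hρ).mul_left _).sum_le_tsum _
      fun _ _ => by positivity)
  have hiM : ((i : ℝ) + 1) ^ ρ ≤ (M : ℝ) ^ ρ := by
    gcongr
    exact_mod_cast mem_range.1 hi
  calc ((i : ℝ) + 1) ^ α = exp (a * (M : ℝ) ^ ρ) * (((i : ℝ) + 1) ^ α
        * exp (-(a * (M : ℝ) ^ ρ))) := by
        rw [exp_neg]; field_simp
    _ ≤ _ := by gcongr; linarith [mul_le_mul_of_nonneg_left hiM ha.le]

theorem integral_rpow_le_sum_rpow (α : ℝ) {x : ℝ} {M : ℕ} (hx : 1 ≤ x) (hxM : x ≤ M) :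
    ∫ y in (1 : ℝ)..x, y ^ α ≤ ∑ i ∈ range M, ((i : ℝ) + 1) ^ α := by
  have hnonneg : ∀ c d : ℝ, 0 ≤ c → 0 ≤ᵐ[MeasureTheory.volume.restrict (Set.Ioc c d)]
      fun y : ℝ => y ^ α := fun c d hc =>
    (MeasureTheory.ae_restrict_iff' measurableSet_Ioc).2
      (Eventually.of_forall fun y hy => rpow_nonneg (hc.trans hy.1.le) α)
  rcases le_total 0 α with hα | hα
  · calc ∫ y in (1 : ℝ)..x, y ^ α ≤ ∫ y in (0 : ℝ)..0 + M, y ^ α :=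
          intervalIntegral.integral_mono_interval zero_le_one hx (by simpa using hxM)
            (hnonneg 0 _ le_rfl) (intervalIntegral.intervalIntegrable_rpow (Or.inl hα))
      _ ≤ ∑ i ∈ range M, ((0 : ℝ) + ↑(i + 1)) ^ α :=
          MonotoneOn.integral_le_sum fun y hy z _ hyz => rpow_le_rpow hy.1 hyz hα
      _ = _ := by push_cast; simp only [zero_add]
  · calc ∫ y in (1 : ℝ)..x, y ^ α ≤ ∫ y in (1 : ℝ)..1 + M, y ^ α :=
          intervalIntegral.integral_mono_interval le_rfl hx (by linarith)
            (hnonneg 1 _ zero_le_one) (intervalIntegral.intervalIntegrable_rpow (Or.inr ?_))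
      _ ≤ ∑ i ∈ range M, ((1 : ℝ) + i) ^ α :=
          AntitoneOn.integral_le_sum fun y hy z _ hyz =>
            rpow_le_rpow_of_nonpos (zero_lt_one.trans_le hy.1) hyz hα
      _ = _ := by simp only [add_comm]
    rw [Set.uIcc_of_le (by linarith)]
    exact fun h => absurd h.1 (by norm_num)
theorem rpow_max_le_mul_integral_rpow {ρ : ℝ} (hρ : 0 < ρ) (α : ℝ) {N : ℝ} (hN : 1 ≤ N) :
    N ^ max ((1 + α) / ρ) 0
      ≤ (ρ + max (-(1 + α)) 0) * ∫ y in (1 : ℝ)..(exp 1 * N) ^ (1 / ρ), y ^ α := by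
  set x := (exp 1 * N) ^ (1 / ρ) with hx_def
  set γ := (1 + α) / ρ with hγ
  have hβγ : 1 + α = ρ * γ := by rw [hγ]; field_simp
  have heN : 1 ≤ exp 1 * N := one_le_mul_of_one_le_of_one_le (one_le_exp zero_le_one) hN
  have hx : 1 ≤ x := one_le_rpow heN (by positivity)
  have hxpow : x ^ (α + 1) = exp γ * N ^ γ := by
    rw [hx_def, ← rpow_mul (by positivity), show 1 / ρ * (α + 1) = γ by rw [hγ]; ring,
      mul_rpow (exp_pos 1).le (by positivity), exp_one_rpow]
  have h0 : (0 : ℝ) ∉ Set.uIcc 1 x := by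
    rw [Set.uIcc_of_le hx]; exact fun h => absurd h.1 (by norm_num)
  rcases lt_trichotomy (1 + α) 0 with hβ | hβ | hβ
  · have hγneg : γ < 0 := div_neg_of_neg_of_pos hβ hρ
    rw [max_eq_right hγneg.le, max_eq_left (by linarith), rpow_zero,
      integral_rpow (Or.inr ⟨by linarith, h0⟩), one_rpow]
    have hexp : (1 - γ) * exp γ ≤ 1 := calc
      (1 - γ) * exp γ ≤ exp (-γ) * exp γ := by gcongr; linarith [add_one_le_exp (-γ)]
      _ = 1 := by rw [← exp_add, neg_add_cancel, exp_zero]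
    have hkey : (ρ + -(1 + α)) * x ^ (α + 1) ≤ ρ := calc
      (ρ + -(1 + α)) * x ^ (α + 1) = ρ * ((1 - γ) * exp γ * N ^ γ) := by
        rw [hxpow, hβγ]; ring
      _ ≤ ρ * (1 * 1) := by gcongr; exact rpow_le_one_of_one_le_of_nonpos hN hγneg.le
      _ = ρ := by ring
    rw [← mul_div_assoc, le_div_iff_of_neg (by linarith)]
    linear_combination hkey
  · obtain rfl : α = -1 := by linarith
    have hlog : log x = (1 + log N) / ρ := by
      rw [hx_def, log_rpow (by positivity), log_mul (exp_pos 1).ne' (by positivity), log_exp]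
      ring
    have hγ0 : γ = 0 := by rw [hγ, add_neg_cancel, zero_div]
    simp only [hγ0, add_neg_cancel, neg_zero, max_self, rpow_zero, add_zero, rpow_neg_one]
    rw [integral_inv_of_pos one_pos (by positivity), div_one, hlog, mul_div_cancel₀ _ hρ.ne']
    linarith [log_nonneg hN]
  · have hγpos : 0 < γ := div_pos hβ hρ
    rw [max_eq_left hγpos.le, max_eq_right (by linarith), add_zero,
      integral_rpow (Or.inl (by linarith)), one_rpow, ← mul_div_assoc,
      le_div_iff₀ (by linarith), hxpow, add_comm α, hβγ]
    have hNγ : 1 ≤ N ^ γ := one_le_rpow hN hγpos.le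
    have hexp : 1 + γ ≤ exp γ := by linarith [add_one_le_exp γ]
    nlinarith [mul_le_mul_of_nonneg_right hexp (zero_le_one.trans hNγ)]

theorem rpow_max_le_mul_exp_mul_tsum {ρ a : ℝ} (hρ : 0 < ρ) (ha : 0 < a) (α : ℝ) {N : ℕ}
    (hN : 1 ≤ N) :
    (N : ℝ) ^ max ((1 + α) / ρ) 0
      ≤ (ρ + max (-(1 + α)) 0) * exp (2 ^ ρ * exp 1 * a * N)
        * ∑' n : ℕ, ((n : ℝ) + 1) ^ α * exp (-a * ((n : ℝ) + 1) ^ ρ) := by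
  have hN1 : (1 : ℝ) ≤ N := by exact_mod_cast hN
  set x := (exp 1 * N) ^ (1 / ρ) with hx_def
  have hx : 1 ≤ x := one_le_rpow (one_le_mul_of_one_le_of_one_le (one_le_exp zero_le_one) hN1)
    (by positivity)
  have hxM : x ≤ ⌈x⌉₊ := Nat.le_ceil x
  have hMρ : (⌈x⌉₊ : ℝ) ^ ρ ≤ 2 ^ ρ * exp 1 * N := calc
    (⌈x⌉₊ : ℝ) ^ ρ ≤ (2 * x) ^ ρ := by
      gcongr; linarith [Nat.ceil_lt_add_one (zero_le_one.trans hx)]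
    _ = 2 ^ ρ * exp 1 * N := by
      rw [mul_rpow zero_le_two (by positivity), hx_def, ← rpow_mul (by positivity),
        one_div_mul_cancel hρ.ne', rpow_one, mul_assoc]
  have hQ : 0 ≤ ρ + max (-(1 + α)) 0 := by positivity
  calc (N : ℝ) ^ max ((1 + α) / ρ) 0
      ≤ (ρ + max (-(1 + α)) 0) * ∫ y in (1 : ℝ)..x, y ^ α :=
        rpow_max_le_mul_integral_rpow hρ α hN1
    _ ≤ (ρ + max (-(1 + α)) 0) * ∑ i ∈ range ⌈x⌉₊, ((i : ℝ) + 1) ^ α := by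
        gcongr; exact integral_rpow_le_sum_rpow α hx hxM
    _ ≤ (ρ + max (-(1 + α)) 0) * (exp (a * (⌈x⌉₊ : ℝ) ^ ρ)
          * ∑' n : ℕ, ((n : ℝ) + 1) ^ α * exp (-a * ((n : ℝ) + 1) ^ ρ)) := by
        gcongr; exact sum_rpow_le_exp_mul_tsum α ha hρ _
    _ ≤ (ρ + max (-(1 + α)) 0) * (exp (2 ^ ρ * exp 1 * a * N)
          * ∑' n : ℕ, ((n : ℝ) + 1) ^ α * exp (-a * ((n : ℝ) + 1) ^ ρ)) := by
        gcongr _ * (exp ?_ * _)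
        linarith [mul_le_mul_of_nonneg_left hMρ ha.le]
    _ = _ := by ring

/-- For `c, ρ, h ∈ (0,∞)`, `δ ∈ ℝ`, `N ≥ 1`, `T = N·h`, the series
`Σ_{n=1}^∞ n^{2ρδ} e^{-c n^ρ h}` converges and
`(c^{2δ}(1-e^{-2cT})h/4) Σ_{n=1}^∞ n^{2ρδ} e^{-c n^ρ h}
  ≥ (1-e^{-2cT})(1-e^{-1}) T^{(1/ρ+2δ)⁺} c^{2δ} h^{1-(1/ρ+2δ)⁺}
      / (4^{1+ρδ⁻} e^{2^ρ e c T} (ρ+(1+2ρδ)⁻)) > 0`. -/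
theorem stmt_4 (c ρ h : ℝ) (hc : 0 < c) (hρ : 0 < ρ) (hh : 0 < h)
    (δ : ℝ) (N : ℕ) (hN : 1 ≤ N) (T : ℝ) (hT : T = N * h) :
    Summable (fun n : ℕ =>
      ((n : ℝ) + 1) ^ (2 * ρ * δ) * Real.exp (-c * ((n : ℝ) + 1) ^ ρ * h)) ∧
    (c ^ (2 * δ) * (1 - Real.exp (-2 * c * T)) * h / 4)
        * ∑' n : ℕ, ((n : ℝ) + 1) ^ (2 * ρ * δ) * Real.exp (-c * ((n : ℝ) + 1) ^ ρ * h)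
      ≥ ((1 - Real.exp (-2 * c * T)) * (1 - Real.exp (-1))
            * T ^ (max (1 / ρ + 2 * δ) 0) * c ^ (2 * δ)
            * h ^ (1 - max (1 / ρ + 2 * δ) 0))
          / ((4 : ℝ) ^ (1 + ρ * max (-δ) 0)
            * Real.exp ((2 : ℝ) ^ ρ * Real.exp 1 * c * T)
            * (ρ + max (-(1 + 2 * ρ * δ)) 0)) ∧
    ((1 - Real.exp (-2 * c * T)) * (1 - Real.exp (-1))
            * T ^ (max (1 / ρ + 2 * δ) 0) * c ^ (2 * δ)
            * h ^ (1 - max (1 / ρ + 2 * δ) 0))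
          / ((4 : ℝ) ^ (1 + ρ * max (-δ) 0)
            * Real.exp ((2 : ℝ) ^ ρ * Real.exp 1 * c * T)
            * (ρ + max (-(1 + 2 * ρ * δ)) 0)) > 0 := by
  have hterm : (fun n : ℕ => ((n : ℝ) + 1) ^ (2 * ρ * δ) * exp (-c * ((n : ℝ) + 1) ^ ρ * h))
      = fun n : ℕ => ((n : ℝ) + 1) ^ (2 * ρ * δ) * exp (-(c * h) * ((n : ℝ) + 1) ^ ρ) := by
    funext n; ring_nf
  have hexpo : 1 / ρ + 2 * δ = (1 + 2 * ρ * δ) / ρ := by field_simp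
  have hkey := rpow_max_le_mul_exp_mul_tsum hρ (mul_pos hc hh) (2 * ρ * δ) hN
  rw [← hexpo, ← hterm, show 2 ^ ρ * exp 1 * (c * h) * N = 2 ^ ρ * exp 1 * c * T by
    rw [hT]; ring] at hkey
  set p := max (1 / ρ + 2 * δ) 0
  set Q := ρ + max (-(1 + 2 * ρ * δ)) 0
  set E := 2 ^ ρ * exp 1 * c * T
  set S := ∑' n : ℕ, ((n : ℝ) + 1) ^ (2 * ρ * δ) * exp (-c * ((n : ℝ) + 1) ^ ρ * h)
  have hT0 : 0 < T := hT ▸ mul_pos (by exact_mod_cast hN) hh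
  have hA : 0 < 1 - exp (-2 * c * T) := sub_pos.2 (exp_lt_one_iff.2 (by nlinarith))
  have hB : 0 < 1 - exp (-1) := sub_pos.2 (exp_lt_one_iff.2 (by norm_num))
  have hfour : (4 : ℝ) ≤ 4 ^ (1 + ρ * max (-δ) 0) := by
    conv_lhs => rw [← rpow_one 4]
    exact rpow_le_rpow_of_exponent_le (by norm_num) (le_add_of_nonneg_right (by positivity))
  have hTh : T ^ p * h ^ (1 - p) = N ^ p * h := by
    rw [hT, mul_rpow (by positivity) hh.le, mul_assoc, ← rpow_add hh, add_sub_cancel, rpow_one]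
  have hden : 0 < (4 : ℝ) ^ (1 + ρ * max (-δ) 0) * exp E * Q := by positivity
  refine ⟨hterm ▸ summable_rpow_mul_exp_neg_mul_rpow _ (mul_pos hc hh) hρ, ?_,
    div_pos (by positivity) hden⟩
  rw [ge_iff_le, div_le_iff₀ hden]
  calc (1 - exp (-2 * c * T)) * (1 - exp (-1)) * T ^ p * c ^ (2 * δ) * h ^ (1 - p)
      = (1 - exp (-2 * c * T)) * c ^ (2 * δ) * h * ((1 - exp (-1)) * N ^ p) := by
        linear_combination (1 - exp (-2 * c * T)) * (1 - exp (-1)) * c ^ (2 * δ) * hTh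
    _ ≤ (1 - exp (-2 * c * T)) * c ^ (2 * δ) * h * (1 * (Q * exp E * S)) := by
        gcongr
        linarith [exp_pos (-1)]
    _ = c ^ (2 * δ) * (1 - exp (-2 * c * T)) * h / 4 * S * (4 * exp E * Q) := by ring
    _ ≤ _ := by
        have hS : 0 ≤ S := tsum_nonneg fun n => by positivity
        gcongr
end

section
/- Let δ ∈ ℝ, let h ∈ (0,∞), let N ∈ ℕ with N ≥ 1, and set T = N·h. Then ( π^{4δ} · (1 - e^{-2π²T}) · h / 4 ) · Σ_{n=1}^{∞} n^{4δ} · e^{-π²·n²·h} ≥ [ (1 - e^{-T}) · (1 - e^{-1}) · T^{(1/2 + 2δ)⁺} · π^{4δ} / ( 4^{(1 + 2δ⁻)} · e^{12π²T} · (3 + 4δ⁻) ) ] · h^{min{1/2 - 2δ, 1}} > 0. (This is the deterministic form of the variance-gap lower bound for the one-dimensional Dirichlet Laplacian eigenvalues λ_n = −π²n² with μ_n = |λ_n|^{δ}.) -/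
open Real

set_option maxHeartbeats 1000000 in
private lemma my_summable (δ h : ℝ) (hh : 0 < h) :
    Summable (fun n : ℕ => ((n : ℝ) + 1) ^ (4 * δ) * Real.exp (-π ^ 2 * ((n : ℝ) + 1) ^ 2 * h)) := by
  have hπ := Real.pi_pos
  have hπh : 0 < π ^ 2 * h := by positivity
  set r := Real.exp (-(π ^ 2 * h)) with hr
  have hr0 : 0 < r := Real.exp_pos _
  have hr1 : r < 1 := by
    rw [hr, Real.exp_lt_one_iff]; linarith
  obtain ⟨m, hmδ⟩ : ∃ m : ℕ, 4 * δ ≤ (m : ℝ) := exists_nat_ge (4 * δ)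
  have hsum : Summable (fun n : ℕ => (n : ℝ) ^ m * r ^ n) :=
    summable_pow_mul_geometric_of_norm_lt_one m (by rwa [Real.norm_eq_abs, abs_of_pos hr0])
  have hsum' : Summable (fun n : ℕ => ((n + 1 : ℕ) : ℝ) ^ m * r ^ (n + 1)) :=
    (summable_nat_add_iff 1).2 hsum
  apply hsum'.of_nonneg_of_le
  · intro n; positivity
  · intro n
    push_cast
    have h0 : (0:ℝ) ≤ (n:ℝ) := Nat.cast_nonneg n
    have h2 : (1:ℝ) ≤ (n:ℝ) + 1 := by linarith
    apply mul_le_mul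
    · calc ((n : ℝ) + 1) ^ (4 * δ) ≤ ((n : ℝ) + 1) ^ (m : ℝ) :=
            Real.rpow_le_rpow_of_exponent_le h2 hmδ
        _ = ((n : ℝ) + 1) ^ m := Real.rpow_natCast _ m
    · have hrn : r ^ (n + 1) = Real.exp (((n + 1 : ℕ) : ℝ) * (-(π ^ 2 * h))) := by
        rw [Real.exp_nat_mul]
      rw [hrn]
      apply Real.exp_le_exp.2
      push_cast
      nlinarith [mul_nonneg hπh.le (by positivity : (0:ℝ) ≤ (n:ℝ) ^ 2 + (n:ℝ))]
    · positivity
    · positivity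

private lemma exists_K (N : ℕ) (hN : 1 ≤ N) : ∃ K : ℕ, 1 ≤ K ∧ N ≤ K ^ 2 ∧ K ^ 2 ≤ 3 * N := by
  set s := Nat.sqrt N with hs
  have h1 : s ^ 2 ≤ N := Nat.sqrt_le' N
  have h2 : N < (s + 1) ^ 2 := Nat.lt_succ_sqrt' N
  by_cases hcase : s ^ 2 = N
  · have hs1 : 1 ≤ s := by
      rcases Nat.eq_zero_or_pos s with hs0 | hs1
      · rw [hs0] at hcase; simp at hcase; omega
      · exact hs1
    exact ⟨s, hs1, le_of_eq hcase.symm, by nlinarith⟩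
  · have hN2 : 2 ≤ N := by
      by_contra hlt
      have hN1' : N = 1 := by omega
      subst hN1'
      have hss : s = 1 := by rw [hs]; simp
      rw [hss] at hcase
      simp at hcase
    have hsN : s < N := by rw [hs]; exact Nat.sqrt_lt_self hN2
    have h1' : s ^ 2 < N := lt_of_le_of_ne h1 hcase
    exact ⟨s + 1, by omega, le_of_lt h2, by nlinarith⟩

set_option maxHeartbeats 1000000 in
private lemma key_bound (δ h : ℝ) (hh : 0 < h) (N : ℕ) (hN : 1 ≤ N) :
    (N : ℝ) ^ (max (1 / 2 + 2 * δ) 0) * Real.exp (-(12 * π ^ 2 * ((N : ℝ) * h))) / 2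
      ≤ ∑' n : ℕ, ((n : ℝ) + 1) ^ (4 * δ) * Real.exp (-π ^ 2 * ((n : ℝ) + 1) ^ 2 * h) := by
  have hπ := Real.pi_pos
  have hπh : 0 < π ^ 2 * h := by positivity
  have hsum := my_summable δ h hh
  have hN1 : (1:ℝ) ≤ (N:ℝ) := by exact_mod_cast hN
  rcases le_or_gt (1 / 2 + 2 * δ) 0 with hp | hp
  · -- p = 0 case: use the first term
    rw [max_eq_right hp, Real.rpow_zero, one_mul]
    refine le_trans ?_ (Summable.le_tsum hsum 0 (fun j _ => by positivity))
    rw [show (((0:ℕ) : ℝ) + 1) = 1 by norm_num, Real.one_rpow, one_mul, one_pow, mul_one]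
    have hle : Real.exp (-(12 * π ^ 2 * ((N : ℝ) * h))) ≤ Real.exp (-π ^ 2 * h) := by
      apply Real.exp_le_exp.2
      nlinarith [mul_le_mul_of_nonneg_left hN1 hπh.le]
    have hpos := Real.exp_pos (-(12 * π ^ 2 * ((N : ℝ) * h)))
    linarith
  · -- p > 0 case
    rw [max_eq_left hp.le]
    obtain ⟨K, hK1, hKN, hK3N⟩ := exists_K N hN
    have hK0 : (0:ℝ) < (K:ℝ) := by exact_mod_cast hK1
    have hKNr : (N:ℝ) ≤ (K:ℝ) ^ 2 := by exact_mod_cast hKN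
    have hK3Nr : (K:ℝ) ^ 2 ≤ 3 * (N:ℝ) := by exact_mod_cast hK3N
    set c : ℝ := (K : ℝ) ^ (4 * δ) / 2 * Real.exp (-(12 * π ^ 2 * ((N : ℝ) * h))) with hc
    have hterm : ∀ n ∈ Finset.Ico (K - 1) (2 * K - 1),
        c ≤ ((n : ℝ) + 1) ^ (4 * δ) * Real.exp (-π ^ 2 * ((n : ℝ) + 1) ^ 2 * h) := by
      intro n hn
      rw [Finset.mem_Ico] at hn
      have hn1 : K ≤ n + 1 := by omega
      have hn2 : n + 1 ≤ 2 * K := by omega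
      have hn1r : (K:ℝ) ≤ (n:ℝ) + 1 := by exact_mod_cast hn1
      have hn2r : (n:ℝ) + 1 ≤ 2 * (K:ℝ) := by exact_mod_cast hn2
      have hbase : (K : ℝ) ^ (4 * δ) / 2 ≤ ((n : ℝ) + 1) ^ (4 * δ) := by
        rcases le_or_gt 0 δ with hδ | hδ
        · have hb1 : (K : ℝ) ^ (4 * δ) ≤ ((n : ℝ) + 1) ^ (4 * δ) :=
            Real.rpow_le_rpow hK0.le hn1r (by linarith)
          have hb2 : (0:ℝ) ≤ (K : ℝ) ^ (4 * δ) := Real.rpow_nonneg hK0.le _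
          linarith
        · have hb1 : (2 * (K:ℝ)) ^ (4 * δ) ≤ ((n : ℝ) + 1) ^ (4 * δ) :=
            Real.rpow_le_rpow_of_nonpos (by positivity) hn2r (by linarith)
          have hb2 : (2 * (K:ℝ)) ^ (4 * δ) = (2:ℝ) ^ (4 * δ) * (K:ℝ) ^ (4 * δ) :=
            Real.mul_rpow (by norm_num) hK0.le
          have hb3 : (2:ℝ) ^ (-1 : ℝ) ≤ (2:ℝ) ^ (4 * δ) :=
            Real.rpow_le_rpow_of_exponent_le (by norm_num) (by linarith)
          have hb4 : (2:ℝ) ^ (-1 : ℝ) = 1 / 2 := by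
            rw [Real.rpow_neg_one]; norm_num
          have hb5 : (0:ℝ) ≤ (K : ℝ) ^ (4 * δ) := Real.rpow_nonneg hK0.le _
          have hb6 : 1 / 2 * (K : ℝ) ^ (4 * δ) ≤ (2:ℝ) ^ (4 * δ) * (K:ℝ) ^ (4 * δ) :=
            mul_le_mul_of_nonneg_right (by rw [← hb4]; exact hb3) hb5
          linarith
      have hsq : ((n:ℝ) + 1) ^ 2 ≤ 12 * (N:ℝ) := by
        nlinarith [mul_le_mul hn2r hn2r (by positivity : (0:ℝ) ≤ (n:ℝ) + 1) (by positivity : (0:ℝ) ≤ 2 * (K:ℝ))]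
      have hexp : Real.exp (-(12 * π ^ 2 * ((N : ℝ) * h)))
          ≤ Real.exp (-π ^ 2 * ((n : ℝ) + 1) ^ 2 * h) := by
        apply Real.exp_le_exp.2
        nlinarith [mul_le_mul_of_nonneg_left hsq hπh.le]
      calc c ≤ ((n : ℝ) + 1) ^ (4 * δ) * Real.exp (-(12 * π ^ 2 * ((N : ℝ) * h))) := by
            rw [hc]
            exact mul_le_mul_of_nonneg_right hbase (Real.exp_pos _).le
        _ ≤ ((n : ℝ) + 1) ^ (4 * δ) * Real.exp (-π ^ 2 * ((n : ℝ) + 1) ^ 2 * h) :=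
            mul_le_mul_of_nonneg_left hexp (Real.rpow_nonneg (by positivity) _)
    have hcard : (Finset.Ico (K - 1) (2 * K - 1)).card = K := by
      rw [Nat.card_Ico]; omega
    have hlow : (K : ℝ) * c ≤ ∑ n ∈ Finset.Ico (K - 1) (2 * K - 1),
        ((n : ℝ) + 1) ^ (4 * δ) * Real.exp (-π ^ 2 * ((n : ℝ) + 1) ^ 2 * h) := by
      have hsmul := Finset.card_nsmul_le_sum (Finset.Ico (K - 1) (2 * K - 1))
        (fun n => ((n : ℝ) + 1) ^ (4 * δ) * Real.exp (-π ^ 2 * ((n : ℝ) + 1) ^ 2 * h)) c hterm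
      rwa [hcard, nsmul_eq_mul] at hsmul
    have htsum : ∑ n ∈ Finset.Ico (K - 1) (2 * K - 1),
        ((n : ℝ) + 1) ^ (4 * δ) * Real.exp (-π ^ 2 * ((n : ℝ) + 1) ^ 2 * h)
        ≤ ∑' n : ℕ, ((n : ℝ) + 1) ^ (4 * δ) * Real.exp (-π ^ 2 * ((n : ℝ) + 1) ^ 2 * h) :=
      Summable.sum_le_tsum _ (fun n _ => by positivity) hsum
    refine le_trans ?_ (le_trans hlow htsum)
    have hKK : (N : ℝ) ^ (1 / 2 + 2 * δ) ≤ (K:ℝ) * (K : ℝ) ^ (4 * δ) := by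
      calc (N : ℝ) ^ (1 / 2 + 2 * δ) ≤ ((K:ℝ) ^ 2) ^ (1 / 2 + 2 * δ) :=
            Real.rpow_le_rpow (by linarith) hKNr hp.le
        _ = (K:ℝ) ^ ((2:ℝ) * (1 / 2 + 2 * δ)) := by
            rw [show ((K:ℝ) ^ 2 : ℝ) = (K:ℝ) ^ (2:ℝ) by
              rw [← Real.rpow_natCast (K:ℝ) 2]; norm_num, ← Real.rpow_mul hK0.le]
        _ = (K:ℝ) ^ ((1:ℝ) + 4 * δ) := by
            rw [show (2:ℝ) * (1 / 2 + 2 * δ) = (1:ℝ) + 4 * δ by ring]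
        _ = (K:ℝ) * (K : ℝ) ^ (4 * δ) := by
            rw [Real.rpow_add hK0, Real.rpow_one]
    have hE : (0:ℝ) < Real.exp (-(12 * π ^ 2 * ((N : ℝ) * h))) := Real.exp_pos _
    rw [hc]
    nlinarith [mul_le_mul_of_nonneg_right hKK hE.le]

set_option maxHeartbeats 1000000 in
/-- For `δ ∈ ℝ`, `h ∈ (0,∞)`, `N ≥ 1`, `T = N·h`:
`(π^{4δ}(1-e^{-2π²T})h/4) Σ_{n=1}^∞ n^{4δ} e^{-π²n²h}
  ≥ [(1-e^{-T})(1-e^{-1}) T^{(1/2+2δ)⁺} π^{4δ}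
      / (4^{1+2δ⁻} e^{12π²T} (3+4δ⁻))] h^{min{1/2-2δ,1}} > 0`. -/
theorem stmt_7 (δ : ℝ) (h : ℝ) (hh : 0 < h) (N : ℕ) (hN : 1 ≤ N) (T : ℝ)
    (hT : T = N * h) :
    (π ^ (4 * δ) * (1 - Real.exp (-2 * π ^ 2 * T)) * h / 4)
        * ∑' n : ℕ, ((n : ℝ) + 1) ^ (4 * δ) * Real.exp (-π ^ 2 * ((n : ℝ) + 1) ^ 2 * h)
      ≥ ((1 - Real.exp (-T)) * (1 - Real.exp (-1)) * T ^ (max (1 / 2 + 2 * δ) 0)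
            * π ^ (4 * δ)
          / ((4 : ℝ) ^ (1 + 2 * max (-δ) 0) * Real.exp (12 * π ^ 2 * T)
            * (3 + 4 * max (-δ) 0)))
          * h ^ (min (1 / 2 - 2 * δ) 1) ∧
    ((1 - Real.exp (-T)) * (1 - Real.exp (-1)) * T ^ (max (1 / 2 + 2 * δ) 0)
            * π ^ (4 * δ)
          / ((4 : ℝ) ^ (1 + 2 * max (-δ) 0) * Real.exp (12 * π ^ 2 * T)
            * (3 + 4 * max (-δ) 0)))
          * h ^ (min (1 / 2 - 2 * δ) 1) > 0 := by
  subst hT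
  have hπ := Real.pi_pos
  have hπ3 := Real.pi_gt_three
  have hN1 : (1:ℝ) ≤ (N:ℝ) := by exact_mod_cast hN
  have hT0 : (0:ℝ) < (N:ℝ) * h := by positivity
  set p : ℝ := max (1 / 2 + 2 * δ) 0 with hpdef
  have hp0 : 0 ≤ p := le_max_right _ _
  set m : ℝ := max (-δ) 0 with hmdef
  have hm0 : 0 ≤ m := le_max_right _ _
  have hmin : min (1 / 2 - 2 * δ) 1 = 1 - p := by
    rcases le_total (1 / 2 + 2 * δ) 0 with h' | h'
    · rw [hpdef, max_eq_right h', min_eq_right (by linarith)]; ring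
    · rw [hpdef, max_eq_left h', min_eq_left (by linarith)]; ring
  have he1 : Real.exp (-((N:ℝ) * h)) < 1 := by
    rw [Real.exp_lt_one_iff]; linarith
  have he2 : Real.exp (-1 : ℝ) < 1 := by
    rw [Real.exp_lt_one_iff]; norm_num
  have hpos : ((1 - Real.exp (-((N:ℝ) * h))) * (1 - Real.exp (-1)) * ((N:ℝ) * h) ^ p
            * π ^ (4 * δ)
          / ((4 : ℝ) ^ (1 + 2 * m) * Real.exp (12 * π ^ 2 * ((N:ℝ) * h))
            * (3 + 4 * m)))
          * h ^ (min (1 / 2 - 2 * δ) 1) > 0 := by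
    refine mul_pos (div_pos ?_ ?_) (Real.rpow_pos_of_pos hh _)
    · exact mul_pos (mul_pos (mul_pos (by linarith) (by linarith))
        (Real.rpow_pos_of_pos hT0 _)) (Real.rpow_pos_of_pos hπ _)
    · exact mul_pos (mul_pos (Real.rpow_pos_of_pos (by norm_num) _) (Real.exp_pos _))
        (by linarith)
  refine ⟨?_, hpos⟩
  rw [ge_iff_le, hmin]
  set A : ℝ := π ^ (4 * δ) with hA
  have hA0 : 0 < A := Real.rpow_pos_of_pos hπ _
  set u : ℝ := 1 - Real.exp (-2 * π ^ 2 * ((N:ℝ) * h)) with hu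
  have hu0 : 0 < u := by
    rw [hu, sub_pos, Real.exp_lt_one_iff]
    nlinarith [mul_pos (mul_pos hπ hπ) hT0]
  have huT : 1 - Real.exp (-((N:ℝ) * h)) ≤ u := by
    rw [hu]
    have hee : Real.exp (-2 * π ^ 2 * ((N:ℝ) * h)) ≤ Real.exp (-((N:ℝ) * h)) := by
      apply Real.exp_le_exp.2
      nlinarith [mul_le_mul_of_nonneg_right (show (9:ℝ) ≤ π ^ 2 by nlinarith) hT0.le]
    linarith
  set Ep : ℝ := Real.exp (12 * π ^ 2 * ((N:ℝ) * h)) with hEp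
  have hEp0 : 0 < Ep := Real.exp_pos _
  set E : ℝ := Real.exp (-(12 * π ^ 2 * ((N:ℝ) * h))) with hE
  have hEinv : E = Ep⁻¹ := by rw [hE, hEp, Real.exp_neg]
  have hE0 : 0 < E := Real.exp_pos _
  have hTp : ((N:ℝ) * h) ^ p = (N:ℝ) ^ p * h ^ p :=
    Real.mul_rpow (by linarith) hh.le
  have hhp : h ^ p * h ^ (1 - p) = h := by
    rw [← Real.rpow_add hh]; norm_num
  have hNp0 : 0 < (N:ℝ) ^ p := Real.rpow_pos_of_pos (by linarith) _
  have hhp0 : 0 < h ^ p := Real.rpow_pos_of_pos hh _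
  have hh1p0 : 0 < h ^ (1 - p) := Real.rpow_pos_of_pos hh _
  have hden : 12 * Ep ≤ (4 : ℝ) ^ (1 + 2 * m) * Ep * (3 + 4 * m) := by
    have h4 : (4:ℝ) ≤ (4 : ℝ) ^ (1 + 2 * m) := by
      calc (4:ℝ) = (4:ℝ) ^ (1:ℝ) := (Real.rpow_one 4).symm
        _ ≤ (4 : ℝ) ^ (1 + 2 * m) :=
          Real.rpow_le_rpow_of_exponent_le (by norm_num) (by linarith)
    have s1 : 4 * Ep ≤ (4 : ℝ) ^ (1 + 2 * m) * Ep := mul_le_mul_of_nonneg_right h4 hEp0.le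
    have s2 : (4 : ℝ) ^ (1 + 2 * m) * Ep * 3 ≤ (4 : ℝ) ^ (1 + 2 * m) * Ep * (3 + 4 * m) :=
      mul_le_mul_of_nonneg_left (by linarith) (by nlinarith)
    nlinarith
  have hS := key_bound δ h hh N hN
  set S : ℝ := ∑' n : ℕ, ((n : ℝ) + 1) ^ (4 * δ) * Real.exp (-π ^ 2 * ((n : ℝ) + 1) ^ 2 * h)
    with hSdef
  have hSnn : (N:ℝ) ^ p * E / 2 ≤ S := hS
  calc (1 - Real.exp (-((N:ℝ) * h))) * (1 - Real.exp (-1)) * ((N:ℝ) * h) ^ p * A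
          / ((4 : ℝ) ^ (1 + 2 * m) * Ep * (3 + 4 * m)) * h ^ (1 - p)
      ≤ u * 1 * ((N:ℝ) * h) ^ p * A / (12 * Ep) * h ^ (1 - p) := by
        apply mul_le_mul_of_nonneg_right _ hh1p0.le
        apply div_le_div₀
        · positivity
        · apply mul_le_mul_of_nonneg_right _ hA0.le
          apply mul_le_mul_of_nonneg_right _ (Real.rpow_pos_of_pos hT0 _).le
          exact mul_le_mul huT (by linarith [Real.exp_pos (-1:ℝ)]) (by linarith) hu0.le
        · positivity
        · exact hden
    _ = A * u * h / 4 * ((N:ℝ) ^ p * E / 2) * (2 / 3) := by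
        rw [hTp, hEinv]
        conv_rhs => rw [← hhp]
        field_simp
        ring
    _ ≤ A * u * h / 4 * ((N:ℝ) ^ p * E / 2) := by
        have hnn : 0 ≤ A * u * h / 4 * ((N:ℝ) ^ p * E / 2) := by positivity
        linarith
    _ ≤ A * u * h / 4 * S :=
        mul_le_mul_of_nonneg_left hSnn (by positivity)
end

section
/- Let I be a finite set and let v, w : I → ℝ satisfy 0 ≤ w_i ≤ v_i for every i ∈ I. Set S = Σ_{i∈I} (v_i − w_i) / (1 + 2·w_i). Then 1 − ∏_{i∈I} ( (1 + 2·w_i) / (1 + 2·v_i) )^{1/2} ≥ S · (1 + 2·S)^{-3/2}. -/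
lemma aux_prod {I : Type*} (s : Finset I) (a : I → ℝ) (ha : ∀ i, 0 ≤ a i) :
    1 + ∑ i ∈ s, a i ≤ ∏ i ∈ s, (1 + a i) := by
  induction s using Finset.cons_induction with
  | empty => simp
  | cons j s hj ih =>
    rw [Finset.sum_cons, Finset.prod_cons]
    have h1 : 0 ≤ ∑ i ∈ s, a i := Finset.sum_nonneg fun i _ => ha i
    have h2 : (1 : ℝ) + ∑ i ∈ s, a i ≤ ∏ i ∈ s, (1 + a i) := ih
    nlinarith [ha j]

/-- For a finite set `I` and `v, w : I → ℝ` with `0 ≤ wᵢ ≤ vᵢ`, and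
`S = Σᵢ (vᵢ − wᵢ)/(1+2wᵢ)`, it holds that
`1 − ∏ᵢ ((1+2wᵢ)/(1+2vᵢ))^{1/2} ≥ S (1+2S)^{-3/2}`. -/
theorem stmt_9 {I : Type*} [Fintype I] (v w : I → ℝ)
    (hw : ∀ i, 0 ≤ w i) (hvw : ∀ i, w i ≤ v i)
    (S : ℝ) (hS : S = ∑ i, (v i - w i) / (1 + 2 * w i)) :
    1 - ∏ i, ((1 + 2 * w i) / (1 + 2 * v i)) ^ ((1 : ℝ) / 2)
      ≥ S * (1 + 2 * S) ^ (-(3 : ℝ) / 2) := by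
  set a : I → ℝ := fun i => (v i - w i) / (1 + 2 * w i) with ha_def
  have hwpos : ∀ i, (0 : ℝ) < 1 + 2 * w i := fun i => by nlinarith [hw i]
  have hvpos : ∀ i, (0 : ℝ) < 1 + 2 * v i := fun i => by nlinarith [hw i, hvw i]
  have ha : ∀ i, 0 ≤ a i := fun i =>
    div_nonneg (by linarith [hvw i]) (hwpos i).le
  have hSnn : 0 ≤ S := hS ▸ Finset.sum_nonneg fun i _ => ha i
  have hfac : ∀ i, (1 + 2 * w i) / (1 + 2 * v i) = (1 + 2 * a i)⁻¹ := by
    intro i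
    have hne := (hwpos i).ne'
    have : 1 + 2 * a i = (1 + 2 * v i) / (1 + 2 * w i) := by
      rw [ha_def]
      field_simp
      ring
    rw [this, inv_div]
  have hapos : ∀ i, (0 : ℝ) < 1 + 2 * a i := fun i => by nlinarith [ha i]
  have hprod : 1 + 2 * S ≤ ∏ i, (1 + 2 * a i) := by
    calc 1 + 2 * S = 1 + ∑ i, 2 * a i := by rw [hS, Finset.mul_sum]
    _ ≤ ∏ i, (1 + 2 * a i) :=
      aux_prod Finset.univ _ (fun i => by linarith [ha i])
  have htpos : (0 : ℝ) < 1 + 2 * S := by linarith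
  have hppos : (0 : ℝ) < ∏ i, (1 + 2 * a i) := Finset.prod_pos fun i _ => hapos i
  have hstep : ∏ i, ((1 + 2 * w i) / (1 + 2 * v i)) ^ ((1 : ℝ) / 2)
      ≤ (1 + 2 * S) ^ (-(1 : ℝ) / 2) := by
    have heq : ∏ i, ((1 + 2 * w i) / (1 + 2 * v i)) ^ ((1 : ℝ) / 2)
        = ((∏ i, (1 + 2 * a i))⁻¹) ^ ((1 : ℝ) / 2) := by
      rw [Real.finset_prod_rpow _ _ (fun i _ => div_nonneg (hwpos i).le (hvpos i).le),
        ← Finset.prod_inv_distrib]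
      simp_rw [hfac]
    rw [heq]
    have h1 : (∏ i, (1 + 2 * a i))⁻¹ ≤ (1 + 2 * S)⁻¹ := inv_anti₀ htpos hprod
    calc ((∏ i, (1 + 2 * a i))⁻¹) ^ ((1 : ℝ) / 2)
        ≤ ((1 + 2 * S)⁻¹) ^ ((1 : ℝ) / 2) :=
          Real.rpow_le_rpow (inv_nonneg.2 hppos.le) h1 (by norm_num)
      _ = (1 + 2 * S) ^ (-(1 : ℝ) / 2) := by
          rw [show (-(1 : ℝ))/2 = -(1/2) by norm_num, Real.rpow_neg htpos.le,
            Real.inv_rpow htpos.le]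
  set u : ℝ := Real.sqrt (1 + 2 * S) with hu
  have hu1 : 1 ≤ u := by
    have := Real.sqrt_le_sqrt (show (1:ℝ) ≤ 1 + 2 * S by linarith)
    rwa [Real.sqrt_one] at this
  have hu2 : u ^ 2 = 1 + 2 * S := Real.sq_sqrt htpos.le
  have hupos : (0:ℝ) < u := by linarith
  have hhalf : (1 + 2 * S) ^ (-(1 : ℝ) / 2) = u⁻¹ := by
    rw [show (-(1 : ℝ))/2 = -(1/2) by norm_num, Real.rpow_neg htpos.le,
      hu, Real.sqrt_eq_rpow]
  have h32 : (1 + 2 * S) ^ (-(3 : ℝ) / 2) = (u ^ 3)⁻¹ := by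
    rw [show (-(3 : ℝ))/2 = -(3/2) by norm_num, Real.rpow_neg htpos.le]
    congr 1
    rw [hu, Real.sqrt_eq_rpow, ← Real.rpow_natCast ((1 + 2*S) ^ ((1:ℝ)/2)) 3,
      ← Real.rpow_mul htpos.le]
    norm_num
  have hfin : S * (1 + 2 * S) ^ (-(3 : ℝ) / 2) ≤ 1 - (1 + 2 * S) ^ (-(1 : ℝ) / 2) := by
    rw [hhalf, h32, ← div_eq_mul_inv, div_le_iff₀ (by positivity : (0:ℝ) < u ^ 3)]
    have hexp : (1 - u⁻¹) * u ^ 3 = u ^ 3 - u ^ 2 := by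
      field_simp
    rw [hexp]
    have hkey : 0 ≤ (u - 1) ^ 2 * (2 * u + 1) :=
      mul_nonneg (sq_nonneg _) (by linarith)
    nlinarith [hu2]
  calc S * (1 + 2 * S) ^ (-(3 : ℝ) / 2)
      ≤ 1 - (1 + 2 * S) ^ (-(1 : ℝ) / 2) := hfin
    _ ≤ 1 - ∏ i, ((1 + 2 * w i) / (1 + 2 * v i)) ^ ((1 : ℝ) / 2) := by linarith
end

section
/- Let T ∈ (0,∞), h ∈ (0, T], r ∈ [0,∞), ρ ∈ (0,∞), and γ ∈ [0,∞). Then inf_{κ ∈ (0,T]} max{ 4·κ^{ρ/2}, 57 · max{1, κ^{−3γ}} · h^{r} } ≤ 57 · h^{ ρ·r / (ρ + 6γ) } / ( min{T, 1/T} )^{ (r + 3γ) }. (In the paper γ = θ − ϑ; a suitable choice is κ = min{1,T}·(h/T)^{2r/(ρ+6γ)}.) -/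
/-!
Take `κ = m (h/T)^a` with `m = min T (1/T)` and `a = 2r/(ρ + 6γ)`, and put `s = aρ/2`, `t = 3aγ`,
so that `s + t = r` and `s = ρr/(ρ + 6γ)`. Then `κ^{ρ/2} m^{r+3γ} = m^{ρ/2+r+3γ} (h/T)^s` and
`κ^{-3γ} h^r m^{r+3γ} = m^r T^t h^s`. Since `m ≤ 1`, `m ≤ T` and `m ≤ 1/T`, the leftover powers of
`m` absorb those of `T`: `m^{ρ/2+r+3γ} ≤ T^s` and `m^r ≤ T^{-t}`. Hence both terms of the maximum
at `κ` are at most `57 h^s / m^{r+3γ}`.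
-/

open Real

lemma rpow_le_rpow_of_le_one_of_le {m c s e : ℝ} (hm : 0 < m) (hm1 : m ≤ 1) (hmc : m ≤ c)
    (hs : 0 ≤ s) (hse : s ≤ e) : m ^ e ≤ c ^ s :=
  (rpow_le_rpow_of_exponent_ge hm hm1 hse).trans (rpow_le_rpow hm.le hmc hs)

lemma min_self_one_div_le_one {T : ℝ} (hT : 0 < T) : min T (1 / T) ≤ 1 := by
  rcases le_total T 1 with hT1 | h1T
  · exact (min_le_left _ _).trans hT1
  · exact (min_le_right _ _).trans ((div_le_one hT).2 h1T)

section

variable {T h m a b c e r : ℝ}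

lemma rpow_mul_rpow_div_rpow_mul_rpow_le (hT : 0 < T) (hh : 0 < h) (hm : 0 < m) (hm1 : m ≤ 1)
    (hmT : m ≤ T) (hb : 0 ≤ a * b) (hbe : a * b ≤ b + e) :
    (m * (h / T) ^ a) ^ b * m ^ e ≤ h ^ (a * b) :=
  calc (m * (h / T) ^ a) ^ b * m ^ e = m ^ (b + e) * (h / T) ^ (a * b) := by
        rw [mul_rpow hm.le (by positivity), ← rpow_mul (by positivity), rpow_add hm]; ring
    _ ≤ T ^ (a * b) * (h / T) ^ (a * b) := by
        gcongr; exact rpow_le_rpow_of_le_one_of_le hm hm1 hmT hb hbe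
    _ = h ^ (a * b) := by rw [← mul_rpow hT.le (by positivity), mul_div_cancel₀ _ hT.ne']

lemma rpow_neg_mul_rpow_div_rpow_mul_rpow_le (hT : 0 < T) (hh : 0 < h) (hm : 0 < m)
    (hm1 : m ≤ 1) (hmT : m ≤ 1 / T) (hc : 0 ≤ a * c) (hcr : a * c ≤ r) :
    (m * (h / T) ^ a) ^ (-c) * h ^ r * m ^ (r + c) ≤ h ^ (r - a * c) :=
  calc (m * (h / T) ^ a) ^ (-c) * h ^ r * m ^ (r + c)
        = (m ^ r * T ^ (a * c)) * h ^ (r - a * c) := by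
        rw [mul_rpow hm.le (by positivity), ← rpow_mul (by positivity), div_rpow hh.le hT.le,
          rpow_add hm, rpow_sub hh, rpow_neg hm.le, mul_neg, rpow_neg hh.le, rpow_neg hT.le]
        field_simp
    _ ≤ 1 * h ^ (r - a * c) := by
        gcongr
        calc m ^ r * T ^ (a * c) ≤ (1 / T) ^ (a * c) * T ^ (a * c) := by
              gcongr; exact rpow_le_rpow_of_le_one_of_le hm hm1 hmT hc hcr
          _ = 1 := by rw [← mul_rpow (by positivity) hT.le, one_div_mul_cancel hT.ne', one_rpow]
    _ = h ^ (r - a * c) := one_mul _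

end

/-- For `T ∈ (0,∞)`, `h ∈ (0,T]`, `r ∈ [0,∞)`, `ρ ∈ (0,∞)`, `γ ∈ [0,∞)`:
`inf_{κ ∈ (0,T]} max{4κ^{ρ/2}, 57 max{1, κ^{-3γ}} h^r}
  ≤ 57 h^{ρr/(ρ+6γ)} / (min{T, 1/T})^{r+3γ}`. -/
theorem stmt_13 (T h r ρ γ : ℝ) (hT : 0 < T) (hh : h ∈ Set.Ioc (0 : ℝ) T)
    (hr : 0 ≤ r) (hρ : 0 < ρ) (hγ : 0 ≤ γ) :
    (⨅ κ : Set.Ioc (0 : ℝ) T,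
        max (4 * (κ : ℝ) ^ (ρ / 2)) (57 * max 1 ((κ : ℝ) ^ (-(3 * γ))) * h ^ r))
      ≤ 57 * h ^ (ρ * r / (ρ + 6 * γ)) / (min T (1 / T)) ^ (r + 3 * γ) := by
  obtain ⟨hh0, hhT⟩ := hh
  set m := min T (1 / T)
  have hm0 : 0 < m := lt_min hT (by positivity)
  have hm1 : m ≤ 1 := min_self_one_div_le_one hT
  set a := 2 * r / (ρ + 6 * γ)
  have hs : a * (ρ / 2) = ρ * r / (ρ + 6 * γ) := by simp only [a]; field_simp
  have hst : a * (ρ / 2) + a * (3 * γ) = r := by simp only [a]; field_simp; ring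
  have hs0 : 0 ≤ a * (ρ / 2) := by positivity
  have ht0 : 0 ≤ a * (3 * γ) := by positivity
  set κ := m * (h / T) ^ a
  have hu1 : (h / T) ^ a ≤ 1 := rpow_le_one (by positivity) ((div_le_one hT).2 hhT) (by positivity)
  have hκ0 : 0 < κ := by positivity
  have hκ1 : κ ≤ 1 := mul_le_one₀ hm1 (by positivity) hu1
  have hκT : κ ≤ T := (mul_le_of_le_one_right hm0.le hu1).trans (min_le_left _ _)
  have hmr : 0 < m ^ (r + 3 * γ) := by positivity
  refine (ciInf_le ⟨0, ?_⟩ ⟨κ, hκ0, hκT⟩).trans (max_le ?_ ?_)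
  · rintro _ ⟨x, rfl⟩
    exact le_max_of_le_left (mul_nonneg (by norm_num) (rpow_nonneg x.2.1.le _))
  · rw [le_div_iff₀ hmr, ← hs]
    calc 4 * κ ^ (ρ / 2) * m ^ (r + 3 * γ) ≤ 4 * h ^ (a * (ρ / 2)) := by
          rw [mul_assoc]
          gcongr
          exact rpow_mul_rpow_div_rpow_mul_rpow_le hT hh0 hm0 hm1 (min_le_left _ _) hs0
            (by linarith)
      _ ≤ 57 * h ^ (a * (ρ / 2)) := by gcongr; norm_num
  · rw [max_eq_right (one_le_rpow_of_pos_of_le_one_of_nonpos hκ0 hκ1 (by linarith)),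
      le_div_iff₀ hmr, ← hs, show a * (ρ / 2) = r - a * (3 * γ) by linarith, mul_assoc,
      mul_assoc]
    gcongr
    rw [← mul_assoc]
    exact rpow_neg_mul_rpow_div_rpow_mul_rpow_le hT hh0 hm0 hm1 (min_le_right _ _) ht0
      (by linarith)
end
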